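/- For all finite simple graphs G₁ and G₂ on disjoint vertex sets, the lettericity of the disjoint union satisfies ℓ(G₁ ⊎ G₂) ≤ ℓ(G₁) + ℓ(G₂); likewise, the join (the complement of the disjoint union of the complements) satisfies the same bound. -/

import Mathlib

/-- A `k`-lettering of a graph `G`: a decoder `D ⊆ Fin k × Fin k`, a letter
assignment `L`, and an injective ordering `ord` such that for `ord u < ord v`,
`u` and `v` are adjacent iff `(L u, L v) ∈ D`. -/
def HasLettering {V : Type*} (G : SimpleGraph V) (k : ℕ) : Prop :=
  ∃ (D : Set (Fin k × Fin k)) (L : V → Fin k) (ord : V → ℕ),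
    Function.Injective ord ∧
    ∀ u v : V, u ≠ v → ord u < ord v → (G.Adj u v ↔ (L u, L v) ∈ D)

/-- The lettericity of a graph: the least `k` such that it has a `k`-lettering. -/
noncomputable def lettericity {V : Type*} (G : SimpleGraph V) : ℕ :=
  sInf {k | HasLettering G k}


lemma hasLettering_card {V : Type} [Fintype V] (G : SimpleGraph V) :
    HasLettering G (Fintype.card V) := by
  classical
  let e := Fintype.equivFin V
  exact ⟨{p | G.Adj (e.symm p.1) (e.symm p.2)}, e, fun v => (e v : ℕ),
    fun u v h => e.injective (Fin.ext h),
    fun u v _ _ => by simp⟩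

lemma hasLettering_combine {V₁ V₂ : Type} {G₁ : SimpleGraph V₁} {G₂ : SimpleGraph V₂}
    {k₁ k₂ : ℕ} (h₁ : HasLettering G₁ k₁) (h₂ : HasLettering G₂ k₂)
    (H : SimpleGraph (V₁ ⊕ V₂)) (c : Prop)
    (hll : ∀ u v, H.Adj (Sum.inl u) (Sum.inl v) ↔ G₁.Adj u v)
    (hrr : ∀ u v, H.Adj (Sum.inr u) (Sum.inr v) ↔ G₂.Adj u v)
    (hlr : ∀ u v, H.Adj (Sum.inl u) (Sum.inr v) ↔ c)
    (hrl : ∀ u v, H.Adj (Sum.inr u) (Sum.inl v) ↔ c) :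
    HasLettering H (k₁ + k₂) := by
  obtain ⟨D₁, L₁, o₁, ho₁, hD₁⟩ := h₁
  obtain ⟨D₂, L₂, o₂, ho₂, hD₂⟩ := h₂
  refine ⟨{p | (∃ a b, (a, b) ∈ D₁ ∧ p = (Fin.castAdd k₂ a, Fin.castAdd k₂ b)) ∨
      (∃ a b, (a, b) ∈ D₂ ∧ p = (Fin.natAdd k₁ a, Fin.natAdd k₁ b)) ∨
      (c ∧ ¬ ((p.1 : ℕ) < k₁ ↔ (p.2 : ℕ) < k₁))},
    Sum.elim (fun u => Fin.castAdd k₂ (L₁ u)) (fun v => Fin.natAdd k₁ (L₂ v)),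
    Sum.elim (fun u => 2 * o₁ u) (fun v => 2 * o₂ v + 1), ?_, ?_⟩
  · intro x y h
    cases x <;> cases y <;> simp only [Sum.elim_inl, Sum.elim_inr] at h <;>
      first
        | (congr 1; exact ho₁ (by omega))
        | (congr 1; exact ho₂ (by omega))
        | omega
  · rintro (u | u) (v | v) hne hlt <;>
      simp only [Sum.elim_inl, Sum.elim_inr, Set.mem_setOf_eq, hll, hrr, hlr, hrl]
    · rw [hD₁ u v (by simpa using hne) (by simpa using hlt)]
      constructor
      · intro h; exact Or.inl ⟨_, _, h, rfl⟩
      · rintro (⟨a, b, hab, heq⟩ | ⟨a, b, hab, heq⟩ | ⟨hc, hv⟩)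
        · simp only [Prod.mk.injEq] at heq
          have e1 : L₁ u = a := Fin.val_injective (by simpa using congrArg Fin.val heq.1)
          have e2 : L₁ v = b := Fin.val_injective (by simpa using congrArg Fin.val heq.2)
          rwa [e1, e2]
        · simp only [Prod.mk.injEq] at heq
          have := congrArg Fin.val heq.1
          simp at this; omega
        · exfalso; exact hv (by simp only [Fin.coe_castAdd, Fin.coe_natAdd]; omega)
    · constructor
      · intro h; exact Or.inr (Or.inr ⟨h, by simp only [Fin.coe_castAdd, Fin.coe_natAdd]; omega⟩)
      · rintro (⟨a, b, hab, heq⟩ | ⟨a, b, hab, heq⟩ | ⟨hc, hv⟩)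
        · simp only [Prod.mk.injEq] at heq
          have := congrArg Fin.val heq.2; simp at this; omega
        · simp only [Prod.mk.injEq] at heq
          have := congrArg Fin.val heq.1; simp at this; omega
        · exact hc
    · constructor
      · intro h; exact Or.inr (Or.inr ⟨h, by simp only [Fin.coe_castAdd, Fin.coe_natAdd]; omega⟩)
      · rintro (⟨a, b, hab, heq⟩ | ⟨a, b, hab, heq⟩ | ⟨hc, hv⟩)
        · simp only [Prod.mk.injEq] at heq
          have := congrArg Fin.val heq.1; simp at this; omega
        · simp only [Prod.mk.injEq] at heq
          have := congrArg Fin.val heq.2; simp at this; omega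
        · exact hc
    · rw [hD₂ u v (by simpa using hne) (by simp only [Sum.elim_inr] at hlt; omega)]
      constructor
      · intro h; exact Or.inr (Or.inl ⟨_, _, h, rfl⟩)
      · rintro (⟨a, b, hab, heq⟩ | ⟨a, b, hab, heq⟩ | ⟨hc, hv⟩)
        · simp only [Prod.mk.injEq] at heq
          have := congrArg Fin.val heq.1; simp at this; omega
        · simp only [Prod.mk.injEq] at heq
          have e1 : L₂ u = a := Fin.val_injective (by simpa using congrArg Fin.val heq.1)
          have e2 : L₂ v = b := Fin.val_injective (by simpa using congrArg Fin.val heq.2)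
          rwa [e1, e2]
        · exfalso; exact hv (by simp only [Fin.coe_castAdd, Fin.coe_natAdd]; omega)


/-- The lettericity of a disjoint union is at most the sum of the lettericities,
and likewise for the join (the complement of the disjoint union of the
complements). -/
theorem lettericity_sum_le (V₁ V₂ : Type) [Fintype V₁] [Fintype V₂]
    (G₁ : SimpleGraph V₁) (G₂ : SimpleGraph V₂) :
    lettericity (G₁ ⊕g G₂) ≤ lettericity G₁ + lettericity G₂ ∧
      lettericity (G₁ᶜ ⊕g G₂ᶜ)ᶜ ≤ lettericity G₁ + lettericity G₂ := by

  have h₁ : HasLettering G₁ (lettericity G₁) := by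
    have := Nat.sInf_mem (s := {k | HasLettering G₁ k}) ⟨_, hasLettering_card G₁⟩
    exact this
  have h₂ : HasLettering G₂ (lettericity G₂) := by
    have := Nat.sInf_mem (s := {k | HasLettering G₂ k}) ⟨_, hasLettering_card G₂⟩
    exact this
  constructor
  · exact Nat.sInf_le (hasLettering_combine h₁ h₂ (G₁ ⊕g G₂) False
      (fun u v => by simp) (fun u v => by simp) (fun u v => by simp) (fun u v => by simp))
  · refine Nat.sInf_le (hasLettering_combine h₁ h₂ _ True ?_ ?_ ?_ ?_)
    · intro u v
      simp only [SimpleGraph.compl_adj, SimpleGraph.sum_adj, ne_eq, Sum.inl.injEq, not_and,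
        not_not, iff_true]
      constructor
      · rintro ⟨h, h2⟩; exact h2 h
      · intro h; exact ⟨G₁.ne_of_adj h, fun _ => h⟩
    · intro u v
      simp only [SimpleGraph.compl_adj, SimpleGraph.sum_adj, ne_eq, Sum.inr.injEq, not_and,
        not_not, iff_true]
      constructor
      · rintro ⟨h, h2⟩; exact h2 h
      · intro h; exact ⟨G₂.ne_of_adj h, fun _ => h⟩
    · intro u v; simp [SimpleGraph.compl_adj]
    · intro u v; simp [SimpleGraph.compl_adj]
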